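/- arXiv:2409.20030 — 2 statements merged into one kernel-verified Lean document; each statement's English description precedes it below -/
import Mathlib

section
/- Let C be an n×d real matrix, d a vector in ℝ^n, and r, r' vectors in ℝ^n with nonnegative entries satisfying |r'_e − r_e| ≤ r'_e for all e. Define Ψ(r) = min over Δ ∈ ℝ^d of Σ_e r_e (CΔ − d)_e², and let Δ* attain the minimum for r. Then Ψ(r') ≥ Ψ(r) + Σ_e ((r'_e − r_e)/r'_e) · r_e · (CΔ* − d)_e². -/
/-- Perturbation lower bound on the weighted least-squares potential Ψ. -/
theorem psi_change {n d : ℕ} (C : Matrix (Fin n) (Fin d) ℝ) (dv : Fin n → ℝ)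
    (r r' : Fin n → ℝ) (hr : ∀ e, 0 ≤ r e) (hr' : ∀ e, 0 ≤ r' e)
    (hclose : ∀ e, |r' e - r e| ≤ r' e)
    (Δstar : Fin d → ℝ)
    (hmin : ∀ Δ : Fin d → ℝ,
      ∑ e, r e * (C.mulVec Δstar e - dv e) ^ 2 ≤ ∑ e, r e * (C.mulVec Δ e - dv e) ^ 2) :
    ∀ Δ : Fin d → ℝ,
      (∑ e, r e * (C.mulVec Δstar e - dv e) ^ 2)
        + ∑ e, ((r' e - r e) / r' e) * r e * (C.mulVec Δstar e - dv e) ^ 2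
      ≤ ∑ e, r' e * (C.mulVec Δ e - dv e) ^ 2 := by
  intro Δ
  set f : Fin n → ℝ := fun e => C.mulVec Δstar e - dv e with hf
  set u : Fin n → ℝ := fun e => C.mulVec Δ e - C.mulVec Δstar e with hu
  have hg : ∀ e, C.mulVec Δ e - dv e = f e + u e := by
    intro e; simp only [hf, hu]; ring
  -- r' e = 0 forces r e = 0
  have hr0 : ∀ e, r' e = 0 → r e = 0 := by
    intro e h
    have := hclose e
    rw [h] at this
    rw [zero_sub, abs_neg] at this
    exact le_antisymm (le_trans (le_abs_self _) this) (hr e)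
  -- first-order optimality: B = Σ r f u = 0
  have hB : ∑ e, r e * (f e * u e) = 0 := by
    set A := ∑ e, r e * (u e) ^ 2 with hA
    set B := ∑ e, r e * (f e * u e) with hBdef
    have hA0 : 0 ≤ A := Finset.sum_nonneg fun e _ => mul_nonneg (hr e) (sq_nonneg _)
    have key : ∀ t : ℝ, 0 ≤ 2 * t * B + t ^ 2 * A := by
      intro t
      have h1 := hmin (Δstar + t • (Δ - Δstar))
      have hmv : ∀ e, C.mulVec (Δstar + t • (Δ - Δstar)) e - dv e = f e + t * u e := by
        intro e
        simp only [Matrix.mulVec_add, Matrix.mulVec_smul, Matrix.mulVec_sub,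
          Pi.add_apply, Pi.smul_apply, Pi.sub_apply, smul_eq_mul, hf, hu]
        ring
      rw [show (∑ e, r e * (C.mulVec (Δstar + t • (Δ - Δstar)) e - dv e) ^ 2)
          = ∑ e, (r e * (f e) ^ 2 + (2 * t) * (r e * (f e * u e)) + t ^ 2 * (r e * (u e) ^ 2))
          from Finset.sum_congr rfl fun e _ => by rw [hmv e]; ring] at h1
      rw [Finset.sum_add_distrib, Finset.sum_add_distrib, ← Finset.mul_sum,
        ← Finset.mul_sum] at h1
      simp only [hf] at h1
      linarith
    have hs : (0:ℝ) < A + 1 := by linarith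
    have hk := key (-B / (A + 1))
    have hk' : 0 ≤ (2 * (-B / (A + 1)) * B + (-B / (A + 1)) ^ 2 * A) * (A + 1) ^ 2 :=
      mul_nonneg hk (by positivity)
    have hexp : (2 * (-B / (A + 1)) * B + (-B / (A + 1)) ^ 2 * A) * (A + 1) ^ 2
        = B ^ 2 * (A - 2 * (A + 1)) := by
      field_simp
      ring
    rw [hexp] at hk'
    have hB2 : B ^ 2 = 0 := le_antisymm (by nlinarith) (sq_nonneg B)
    exact pow_eq_zero_iff two_ne_zero |>.mp hB2
  -- hence Σ r f g = Σ r f²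
  have hfg : ∑ e, r e * (f e * (f e + u e)) = ∑ e, r e * (f e) ^ 2 := by
    have : ∑ e, r e * (f e * (f e + u e))
        = ∑ e, (r e * (f e) ^ 2 + r e * (f e * u e)) :=
      Finset.sum_congr rfl fun e _ => by ring
    rw [this, Finset.sum_add_distrib, hB, add_zero]
  -- rewrite LHS coefficient
  have hco : ∀ e, r e * (f e) ^ 2 + ((r' e - r e) / r' e) * r e * (f e) ^ 2
      = 2 * (r e * (f e) ^ 2) - (r e) ^ 2 / r' e * (f e) ^ 2 := by
    intro e
    rcases eq_or_lt_of_le (hr' e) with h | h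
    · rw [hr0 e h.symm]; simp
    · field_simp
      ring
  -- pointwise inequality
  have hpt : ∀ e, 2 * (r e * (f e * (f e + u e))) - (r e) ^ 2 / r' e * (f e) ^ 2
      ≤ r' e * (f e + u e) ^ 2 := by
    intro e
    rcases eq_or_lt_of_le (hr' e) with h | h
    · rw [hr0 e h.symm, ← h]; simp
    · have hsq := sq_nonneg (r' e * (f e + u e) - r e * f e)
      have hkey : (r' e * (f e + u e) ^ 2 + (r e) ^ 2 / r' e * (f e) ^ 2
            - 2 * (r e * (f e * (f e + u e)))) * r' e
          = (r' e * (f e + u e) - r e * f e) ^ 2 := by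
        field_simp
        ring
      have h2 : 0 ≤ r' e * (f e + u e) ^ 2 + (r e) ^ 2 / r' e * (f e) ^ 2
          - 2 * (r e * (f e * (f e + u e))) :=
        (mul_nonneg_iff_of_pos_right h).mp (by rw [hkey]; exact hsq)
      linarith
  calc (∑ e, r e * (f e) ^ 2) + ∑ e, ((r' e - r e) / r' e) * r e * (f e) ^ 2
      = ∑ e, (r e * (f e) ^ 2 + ((r' e - r e) / r' e) * r e * (f e) ^ 2) :=
        (Finset.sum_add_distrib).symm
    _ = ∑ e, (2 * (r e * (f e) ^ 2) - (r e) ^ 2 / r' e * (f e) ^ 2) :=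
        Finset.sum_congr rfl fun e _ => hco e
    _ = ∑ e, (2 * (r e * (f e * (f e + u e))) - (r e) ^ 2 / r' e * (f e) ^ 2) := by
        rw [Finset.sum_sub_distrib, Finset.sum_sub_distrib, ← Finset.mul_sum,
          ← Finset.mul_sum, hfg]
    _ ≤ ∑ e, r' e * (f e + u e) ^ 2 := Finset.sum_le_sum fun e _ => hpt e
    _ = ∑ e, r' e * (C.mulVec Δ e - dv e) ^ 2 :=
        Finset.sum_congr rfl fun e _ => by rw [hg e]
end

section
/- Let n ≥ 2 and i be a positive integer with i' < i ≤ n for some nonnegative integer i'. Then there exists a finite strictly increasing sequence i' = i₀ < i₁ < ⋯ < i_s = i such that for each j, i_{j+1} − i_j is a power of 2 that divides i_{j+1}, and s ≤ 2 log₂ n. -/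
def DChain (a x s : ℕ) (c : ℕ → ℕ) : Prop :=
  c 0 = a ∧ c s = x ∧ (∀ j < s, c j < c (j + 1)) ∧
  (∀ j < s, ∃ p : ℕ, c (j + 1) - c j = 2 ^ p ∧ 2 ^ p ∣ c (j + 1))

lemma DChain.refl (a : ℕ) : DChain a a 0 (fun _ => a) :=
  ⟨rfl, rfl, fun j hj => absurd hj (Nat.not_lt_zero j),
   fun j hj => absurd hj (Nat.not_lt_zero j)⟩

lemma DChain.extend {a y s : ℕ} {c : ℕ → ℕ} (h : DChain a y s c) {x p : ℕ}
    (hyx : y < x) (hstep : x - y = 2 ^ p) (hdvd : 2 ^ p ∣ x) :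
    DChain a x (s + 1) (fun j => if j = s + 1 then x else c j) := by
  obtain ⟨h0, hs, hmono, hpow⟩ := h
  refine ⟨?_, ?_, ?_, ?_⟩
  · simp only [show (0 : ℕ) ≠ s + 1 by omega, if_false]; exact h0
  · simp
  · intro j hj
    rcases Nat.lt_or_ge j s with hjs | hjs
    · have h1 : j ≠ s + 1 := by omega
      have h2 : j + 1 ≠ s + 1 := by omega
      simp only [h1, h2, if_false]
      exact hmono j hjs
    · have hje : j = s := by omega
      subst hje
      simp only [show j ≠ j + 1 by omega, if_false, if_pos rfl]
      rw [hs]; exact hyx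
  · intro j hj
    rcases Nat.lt_or_ge j s with hjs | hjs
    · have h1 : j ≠ s + 1 := by omega
      have h2 : j + 1 ≠ s + 1 := by omega
      simp only [h1, h2, if_false]
      exact hpow j hjs
    · have hje : j = s := by omega
      subst hje
      simp only [show j ≠ j + 1 by omega, if_false, if_pos rfl]
      rw [hs]; exact ⟨p, hstep, hdvd⟩

/-- Fine phase: if `x - i' < 2^q` and `2^q ∣ x`, chain of length ≤ q. -/
lemma dchain_fine (i' : ℕ) : ∀ q x, i' < x → x - i' < 2 ^ q → 2 ^ q ∣ x →
    ∃ s c, DChain i' x s c ∧ s ≤ q := by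
  intro q
  induction q using Nat.strong_induction_on with
  | _ q ih =>
    intro x hx hlt hdvd
    have hd1 : 1 ≤ x - i' := by omega
    set r := Nat.log 2 (x - i') with hr
    have hr1 : 2 ^ r ≤ x - i' := Nat.pow_log_le_self 2 (by omega)
    have hr2 : x - i' < 2 ^ (r + 1) := Nat.lt_pow_succ_log_self (by norm_num) _
    have hrq : r < q := by
      have h1 : 2 ^ r < 2 ^ q := lt_of_le_of_lt hr1 hlt
      exact (Nat.pow_lt_pow_iff_right (by norm_num)).mp h1
    have hdr : 2 ^ r ∣ x := dvd_trans (pow_dvd_pow 2 hrq.le) hdvd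
    have hrx : 2 ^ r ≤ x := by omega
    have hpos : 0 < 2 ^ r := Nat.pow_pos (by norm_num)
    have hyx : x - 2 ^ r < x := by omega
    have hstep : x - (x - 2 ^ r) = 2 ^ r := by omega
    rcases eq_or_lt_of_le (show i' ≤ x - 2 ^ r by omega) with he | hlt'
    · refine ⟨1, _, (DChain.refl i').extend (he ▸ hyx) (by omega) hdr, by omega⟩
    · have h1 : (x - 2 ^ r) - i' < 2 ^ r := by omega
      have h2 : 2 ^ r ∣ (x - 2 ^ r) := Nat.dvd_sub hdr dvd_rfl
      obtain ⟨s, c, hc, hs⟩ := ih r hrq (x - 2 ^ r) hlt' h1 h2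
      exact ⟨s + 1, _, hc.extend hyx hstep hdr, by omega⟩

/-- Main descent. -/
lemma dchain_main (i' n : ℕ) (hn : 2 ≤ n) : ∀ M x b, 2 * x ≤ M + b → i' ≤ x → x ≤ n →
    2 ^ b ∣ x → b ≤ Nat.log 2 n →
    ∃ s c, DChain i' x s c ∧ s ≤ 2 * Nat.log 2 n - b := by
  intro M
  induction M with
  | zero =>
    intro x b hM hix hxn hdvd hb
    rcases eq_or_lt_of_le hix with he | hx
    · exact ⟨0, _, by rw [← he]; exact DChain.refl i', by omega⟩
    · exfalso
      have h1 : 2 ^ b ≤ x := Nat.le_of_dvd (by omega) hdvd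
      have h2 : b < 2 ^ b := Nat.lt_two_pow_self (n := b)
      omega
  | succ M ih =>
    intro x b hM hix hxn hdvd hb
    rcases eq_or_lt_of_le hix with he | hx
    · exact ⟨0, _, by rw [← he]; exact DChain.refl i', by omega⟩
    have hx1 : 1 ≤ x := by omega
    have hbx : 2 ^ b ≤ x := Nat.le_of_dvd (by omega) hdvd
    have hbb : b < 2 ^ b := Nat.lt_two_pow_self (n := b)
    have hlog1 : 0 < Nat.log 2 n := Nat.log_pos (by norm_num) hn
    by_cases h2b : 2 ^ (b + 1) ∣ x
    · have hle : 2 ^ (b + 1) ≤ x := Nat.le_of_dvd (by omega) h2b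
      have hble : b + 1 ≤ Nat.log 2 n :=
        (Nat.le_log_iff_pow_le (by norm_num) (by omega)).mpr (le_trans hle hxn)
      obtain ⟨s, c, hc, hs⟩ := ih x (b + 1) (by omega) hix hxn h2b hble
      exact ⟨s, c, hc, by omega⟩
    · by_cases hA : i' ≤ x - 2 ^ b
      · rcases Nat.eq_zero_or_pos (x - 2 ^ b) with hy0 | hy1
        · -- x = 2^b, i' = 0
          have hx2b : x = 2 ^ b := by omega
          have hi0 : i' = 0 := by omega
          refine ⟨1, _, (DChain.refl i').extend (show i' < x by omega)
            (show x - i' = 2 ^ b by omega) (hx2b ▸ dvd_rfl), by omega⟩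
        · obtain ⟨m, hm⟩ := hdvd
          have hmodd : m % 2 = 1 := by
            rcases Nat.even_or_odd m with hme | hmo
            · exfalso
              obtain ⟨k, hk⟩ := hme
              exact h2b ⟨k, by rw [hm, hk]; ring⟩
            · exact Nat.odd_iff.mp hmo
          obtain ⟨k, hk⟩ : ∃ k, m - 1 = 2 * k := ⟨(m - 1) / 2, by omega⟩
          have hysub : x - 2 ^ b = 2 ^ (b + 1) * k := by
            have h2 : x - 2 ^ b = 2 ^ b * (m - 1) := by
              rw [hm, Nat.mul_sub, mul_one]
            rw [h2, hk, pow_succ]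
            ring
          have hdy : 2 ^ (b + 1) ∣ (x - 2 ^ b) := ⟨_, hysub⟩
          have hle : 2 ^ (b + 1) ≤ x - 2 ^ b := Nat.le_of_dvd hy1 hdy
          have hble : b + 1 ≤ Nat.log 2 n :=
            (Nat.le_log_iff_pow_le (by norm_num) (by omega)).mpr (by omega)
          obtain ⟨s, c, hc, hs⟩ := ih (x - 2 ^ b) (b + 1) (by omega) hA (by omega) hdy hble
          refine ⟨s + 1, _, hc.extend (show x - 2 ^ b < x by omega)
            (show x - (x - 2 ^ b) = 2 ^ b by omega) ⟨m, hm⟩, by omega⟩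
      · have h1 : x - i' < 2 ^ b := by omega
        obtain ⟨s, c, hc, hs⟩ := dchain_fine i' b x hx h1 hdvd
        exact ⟨s, c, hc, by omega⟩

/-- Dyadic chain decomposition: any interval `(i', i]` with `i ≤ n` can be traversed
by at most `2 log₂ n` increasing steps, each of power-of-two size dividing its upper
endpoint. -/
theorem dyadic_chain (n i i' : ℕ) (hn : 2 ≤ n) (h1 : i' < i) (h2 : i ≤ n) :
    ∃ (s : ℕ) (c : ℕ → ℕ),
      c 0 = i' ∧ c s = i ∧
      (∀ j < s, c j < c (j + 1)) ∧
      (∀ j < s, ∃ p : ℕ, c (j + 1) - c j = 2 ^ p ∧ 2 ^ p ∣ c (j + 1)) ∧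
      s ≤ 2 * Nat.log 2 n := by
  obtain ⟨s, c, ⟨hc0, hcs, hmono, hpow⟩, hs⟩ :=
    dchain_main i' n hn (2 * i) i 0 (by omega) h1.le h2 (one_dvd _) (Nat.zero_le _)
  exact ⟨s, c, hc0, hcs, hmono, hpow, by omega⟩
end
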